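/- (Structure of the Zero Set) Let Ω ⊆ ℍ be a symmetric slice domain and f : Ω → ℍ a slice regular function not identically zero. Then the zero set of f consists of isolated points and isolated 2-spheres of the form x + yS with y ≠ 0: every zero q₀ of f either is isolated in the zero set, or lies on a sphere x + yS contained in the zero set which is isolated among the components of the zero set. -/

import Mathlib

noncomputable section

abbrev H := Quaternion ℝ

/-- The sphere of quaternion imaginary units. -/
def Sph : Set H := {q : H | q ^ 2 = -1}

/-- The complex line (Slice) through 1 and `I`. -/
def Slice (I : H) : Set H := {q : H | ∃ x y : ℝ, q = (x : H) + y • I}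

/-- The 2-sphere `x + y𝕊`. -/
def sphSet (x y : ℝ) : Set H := {q : H | ∃ I ∈ Sph, q = (x : H) + y • I}

/-- The real axis inside the quaternions. -/
def realAxis : Set H := {q : H | ∃ r : ℝ, q = (r : H)}

/-- `f` is holomorphic on the `I`-Slice of `Ω`: at every point of `Ω ∩ L_I` the
map `(x,y) ↦ f(x+yI)` is (real) differentiable and satisfies the
Cauchy–Riemann equation `∂f/∂x + I ∂f/∂y = 0`. -/
def HoloSlice (Ω : Set H) (f : H → H) (I : H) : Prop :=
  ∀ x y : ℝ, (x : H) + y • I ∈ Ω →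
    DifferentiableAt ℝ (fun p : ℝ × ℝ => f ((p.1 : H) + p.2 • I)) (x, y) ∧
    fderiv ℝ (fun p : ℝ × ℝ => f ((p.1 : H) + p.2 • I)) (x, y) (1, 0)
      + I * fderiv ℝ (fun p : ℝ × ℝ => f ((p.1 : H) + p.2 • I)) (x, y) (0, 1) = 0

/-- Slice regular functions: every Slice restriction is holomorphic. -/
def SliceRegular (Ω : Set H) (f : H → H) : Prop :=
  ∀ I ∈ Sph, HoloSlice Ω f I

/-- A Slice domain: a domain intersecting the real axis whose slices are domains. -/
def IsSliceDomain (Ω : Set H) : Prop :=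
  IsOpen Ω ∧ IsConnected Ω ∧ (Ω ∩ realAxis).Nonempty ∧
  ∀ I ∈ Sph, IsConnected (Ω ∩ Slice I)

/-- Axially symmetric set. -/
def AxSymm (C : Set H) : Prop :=
  ∀ (x y : ℝ), ∀ I ∈ Sph, (x : H) + y • I ∈ C → ∀ J ∈ Sph, (x : H) + y • J ∈ C

/-- Symmetric Slice domain. -/
def IsSymmSliceDomain (Ω : Set H) : Prop := IsSliceDomain Ω ∧ AxSymm Ω

/-- Orthogonality of quaternions w.r.t. the Euclidean inner product `re (p * star q)`. -/
def Orth (I J : H) : Prop := (I * star J).re = 0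

/-- `F, G` give a splitting `f = F + G J` of `f` on the Slice `Ω ∩ L_I`,
with `F, G` holomorphic and `L_I`-valued. -/
structure IsSplitting (Ω : Set H) (f : H → H) (I J : H) (F G : H → H) : Prop where
  mapsF : ∀ q ∈ Ω ∩ Slice I, F q ∈ Slice I
  mapsG : ∀ q ∈ Ω ∩ Slice I, G q ∈ Slice I
  holoF : HoloSlice Ω F I
  holoG : HoloSlice Ω G I
  eq : ∀ q ∈ Ω ∩ Slice I, f q = F q + G q * J

/-- `h` is the regular product `f * g`: it is Slice regular and restricts on some
Slice `L_I` (with `I ⊥ J`, splittings `f = F + GJ`, `g = F' + G'J`) to the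
product formula.  (Note `star` is quaternionic conjugation, which restricts to
complex conjugation on each Slice.) -/
def IsRegularProduct (Ω : Set H) (f g h : H → H) : Prop :=
  SliceRegular Ω h ∧
  ∃ I ∈ Sph, ∃ J ∈ Sph, Orth I J ∧
    ∃ F G F' G' : H → H, IsSplitting Ω f I J F G ∧ IsSplitting Ω g I J F' G' ∧
      ∀ q ∈ Ω ∩ Slice I,
        h q = (F q * F' q - G q * star (G' (star q)))
            + (F q * G' q + G q * star (F' (star q))) * J

/-- `fc` is the regular conjugate of `f`. -/
def IsRegularConj (Ω : Set H) (f fc : H → H) : Prop :=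
  SliceRegular Ω fc ∧
  ∃ I ∈ Sph, ∃ J ∈ Sph, Orth I J ∧
    ∃ F G : H → H, IsSplitting Ω f I J F G ∧
      ∀ q ∈ Ω ∩ Slice I, fc q = star (F (star q)) - G q * J

/-- `fs` is the symmetrization `f^s = f * f^c` of `f`. -/
def IsSymmetrization (Ω : Set H) (f fs : H → H) : Prop :=
  ∃ fc : H → H, IsRegularConj Ω f fc ∧ IsRegularProduct Ω f fc fs

/-- The degenerate set of `f`: union of the spheres `x + y𝕊` (`y ≠ 0`)
contained in `Ω` on which `f` is constant. -/
def DegSet (Ω : Set H) (f : H → H) : Set H :=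
  {q : H | ∃ x y : ℝ, y ≠ 0 ∧ q ∈ sphSet x y ∧ sphSet x y ⊆ Ω ∧
    ∀ p ∈ sphSet x y, ∀ p' ∈ sphSet x y, f p = f p'}


/-!
Representation formula: `f(x + yJ) = a + J b` with `a, b` independent of `J ∈ 𝕊`, because both
sides satisfy the Cauchy–Riemann equation `∂_y = J ∂_x` and agree on the real axis. Hence `f`
vanishes on the whole sphere `x + y𝕊` as soon as it has two zeros there, and a zero anywhere on
that sphere forces a zero at `x + yi` of the symmetrization `f^s`, which on the slice `ℂ_i` is
the holomorphic function `F(z) conj(F(conj z)) + G(z) conj(G(conj z))` of the splitting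
`f = F + G j`. By the identity principle `f` cannot vanish on all of `Ω ∩ ℝ`, and
`f^s(r) = |f(r)|²` there, so the zeros of `f^s` are isolated: near a zero of `f`, every other zero
lies on its sphere.
-/

open Quaternion Complex ComplexConjugate Topology

namespace Sph

variable {I : H}

lemma mul_self (hI : I ∈ Sph) : I * I = -1 := by
  simpa [Sph, sq] using hI

lemma re_eq_zero (hI : I ∈ Sph) : I.re = 0 := by
  have h := mul_self hI
  have h0 := congrArg (·.re) h
  have h1 := congrArg (·.imI) h
  have h2 := congrArg (·.imJ) h
  have h3 := congrArg (·.imK) h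
  simp only [re_mul, re_neg, re_one, imI_mul, imI_neg, imI_one, imJ_mul, imJ_neg, imJ_one, imK_mul,
    imK_neg, imK_one, neg_zero] at h0 h1 h2 h3
  nlinarith [sq_nonneg I.re, sq_nonneg I.imI, sq_nonneg I.imJ, sq_nonneg I.imK]

lemma star_eq (hI : I ∈ Sph) : star I = -I := by
  ext <;> simp [re_eq_zero hI]

lemma normSq_eq_one (hI : I ∈ Sph) : normSq I = 1 := by
  have h := self_mul_star I
  rw [star_eq hI, mul_neg, mul_self hI, neg_neg] at h
  simpa using congrArg (·.re) h.symm

lemma norm_eq_one (hI : I ∈ Sph) : ‖I‖ = 1 := by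
  have := normSq_eq_norm_mul_self I
  rw [normSq_eq_one hI] at this
  nlinarith [norm_nonneg I]

lemma neg_mem (hI : I ∈ Sph) : -I ∈ Sph := by
  simpa [Sph] using hI

lemma unit_im_mem {q : H} (hq : q.im ≠ 0) : ‖q.im‖⁻¹ • q.im ∈ Sph := by
  have hn : ‖q.im‖ ≠ 0 := norm_ne_zero_iff.mpr hq
  rw [Sph, Set.mem_ofPred_eq, smul_pow, Quaternion.im_sq, normSq_eq_norm_mul_self,
    ← Quaternion.coe_mul_eq_smul]
  have h : ‖q.im‖⁻¹ ^ 2 * -(‖q.im‖ * ‖q.im‖) = -1 := by field_simp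
  simpa using congrArg (fun r : ℝ => (r : H)) h

end Sph

def qI : H := ⟨0, 1, 0, 0⟩

@[simp] lemma qI_re : qI.re = 0 := rfl
@[simp] lemma qI_imI : qI.imI = 1 := rfl
@[simp] lemma qI_imJ : qI.imJ = 0 := rfl
@[simp] lemma qI_imK : qI.imK = 0 := rfl

lemma qI_mem : qI ∈ Sph := by
  show qI ^ 2 = -1
  rw [sq]
  ext <;> simp [Quaternion.re_mul, Quaternion.imI_mul, Quaternion.imJ_mul, Quaternion.imK_mul]

def toSlice (I : H) (z : ℂ) : H := (z.re : H) + z.im • I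

@[simp] lemma toSlice_ofReal (I : H) (r : ℝ) : toSlice I r = r := by
  simp [toSlice]

@[simp] lemma toSlice_I (I : H) : toSlice I Complex.I = I := by
  simp [toSlice]

lemma toSlice_conj (I : H) (z : ℂ) : toSlice I (conj z) = toSlice (-I) z := by
  simp [toSlice]

lemma toSlice_mk (I : H) (x y : ℝ) : toSlice I ⟨x, y⟩ = (x : H) + y • I := rfl

lemma toSlice_eq_lift {I : H} (hI : I ∈ Sph) : toSlice I = Complex.lift ⟨I, Sph.mul_self hI⟩ := by
  ext1 z
  simp [toSlice, Complex.liftAux_apply, Quaternion.algebraMap_def]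

lemma norm_toSlice {I : H} (hI : I ∈ Sph) (z : ℂ) : ‖toSlice I z‖ = ‖z‖ := by
  have h : normSq (toSlice I z) = Complex.normSq z := by
    have h1 := Sph.normSq_eq_one hI
    simp only [normSq_def', Sph.re_eq_zero hI] at h1
    simp only [toSlice, normSq_def', re_add, re_coe, re_smul, Sph.re_eq_zero hI, smul_eq_mul,
      mul_zero, add_zero, imI_add, imI_coe, imI_smul, zero_add, imJ_add, imJ_coe, imJ_smul,
      imK_add, imK_coe, imK_smul, Complex.normSq_apply]
    linear_combination z.im ^ 2 * h1
  rw [normSq_eq_norm_mul_self, Complex.normSq_eq_norm_sq, sq] at h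
  nlinarith [norm_nonneg (toSlice I z), norm_nonneg z]

lemma continuous_toSlice (I : H) : Continuous (toSlice I) := by
  have := Quaternion.continuous_coe
  unfold toSlice; fun_prop

lemma isInducing_toSlice {I : H} (hI : I ∈ Sph) : IsInducing (toSlice I) := by
  rw [toSlice_eq_lift hI]
  let φ := Complex.lift ⟨I, Sph.mul_self hI⟩
  exact (LinearMap.isClosedEmbedding_of_injective (f := φ.toLinearMap)
    (LinearMap.ker_eq_bot.mpr φ.toRingHom.injective)).toIsInducing

lemma differentiableAt_of_hasFDerivAt_of_map_I {E : Type*} [NormedAddCommGroup E]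
    [NormedSpace ℝ E] [NormedSpace ℂ E] [IsScalarTower ℝ ℂ E] {w : ℂ → E} {L : ℂ →L[ℝ] E}
    {z : ℂ} (hw : HasFDerivAt w L z) (hL : L Complex.I = Complex.I • L 1) :
    DifferentiableAt ℂ w z := by
  refine (hasFDerivAt_of_restrictScalars ℝ hw (f' := (1 : ℂ →L[ℂ] ℂ).smulRight (L 1)) ?_)
    |>.differentiableAt
  ext1 v
  have hv : v = v.re • (1 : ℂ) + v.im • Complex.I := by simp
  show v • L 1 = L v
  rw [hv, map_add, map_smul, map_smul, hL, add_smul, smul_assoc, smul_assoc, one_smul]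

/-- `ℂ` acting on `H` by left multiplication through the slice `ℂ_I`: for this structure the
maps satisfying `CauchyRiemannOn I` are `ℂ`-differentiable. -/
abbrev sliceModule {I : H} (hI : I ∈ Sph) : Module ℂ H :=
  Module.compHom H (Complex.lift ⟨I, Sph.mul_self hI⟩).toRingHom

lemma sliceModule_smul {I : H} (hI : I ∈ Sph) (c : ℂ) (q : H) :
    (letI := sliceModule hI; c • q) = toSlice I c * q := by
  rw [toSlice_eq_lift hI]; rfl

abbrev sliceNormedSpace {I : H} (hI : I ∈ Sph) : @NormedSpace ℂ H _ _ :=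
  letI := sliceModule hI
  ⟨fun c q => by rw [sliceModule_smul hI, norm_mul, norm_toSlice hI]⟩

lemma sliceModule_isScalarTower {I : H} (hI : I ∈ Sph) :
    letI := sliceModule hI; IsScalarTower ℝ ℂ H :=
  letI := sliceModule hI
  ⟨fun r c q => by
    rw [sliceModule_smul, sliceModule_smul, toSlice_eq_lift hI, map_smul, smul_mul_assoc]⟩

lemma AnalyticOnNhd.eqOn_zero_of_preconnected_of_eventually_ofReal_eq_zero {E : Type*}
    [NormedAddCommGroup E] [NormedSpace ℂ E] {w : ℂ → E} {U : Set ℂ} (hw : AnalyticOnNhd ℂ w U)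
    (hU : IsPreconnected U) {r : ℝ} (hr : (r : ℂ) ∈ U) (hvan : ∀ᶠ t : ℝ in 𝓝 r, w t = 0) :
    Set.EqOn w 0 U := by
  refine hw.eqOn_zero_of_preconnected_of_frequently_eq_zero hU hr ?_
  have hreal : Filter.Tendsto ((↑) : ℝ → ℂ) (𝓝[≠] r) (𝓝[≠] (r : ℂ)) :=
    tendsto_nhdsWithin_iff.mpr ⟨Complex.continuous_ofReal.continuousWithinAt.tendsto,
      eventually_nhdsWithin_of_forall fun t ht => by simpa using ht⟩
  exact hreal.frequently (hvan.filter_mono nhdsWithin_le_nhds).frequently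

lemma AnalyticOnNhd.exists_forall_dist_lt_eq_of_apply_eq_zero {𝕜 E : Type*}
    [NontriviallyNormedField 𝕜] [NormedAddCommGroup E] [NormedSpace 𝕜 E] {w : 𝕜 → E}
    {U : Set 𝕜} (hw : AnalyticOnNhd 𝕜 w U) (hU : IsPreconnected U) {z₁ : 𝕜} (hz₁ : z₁ ∈ U)
    (hne : w z₁ ≠ 0) {z₀ : 𝕜} (hz₀ : z₀ ∈ U) :
    ∃ ε > 0, ∀ z, dist z z₀ < ε → w z = 0 → z = z₀ := by
  rcases (hw z₀ hz₀).eventually_eq_zero_or_eventually_ne_zero with h | h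
  · exact absurd (hw.eqOn_zero_of_preconnected_of_eventuallyEq_zero hU hz₀ h hz₁) hne
  · obtain ⟨ε, hε, hball⟩ := Metric.eventually_nhds_iff.mp (eventually_nhdsWithin_iff.mp h)
    exact ⟨ε, hε, fun z hz hwz => by_contra fun hne => hball hz hne hwz⟩

def CauchyRiemannOn (J : H) (U : Set ℂ) (w : ℂ → H) : Prop :=
  ∀ z ∈ U, ∃ L : ℂ →L[ℝ] H, HasFDerivAt w L z ∧ L Complex.I = J * L 1

namespace CauchyRiemannOn

variable {I J : H} {U : Set ℂ} {v w : ℂ → H}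

lemma add (hv : CauchyRiemannOn J U v) (hw : CauchyRiemannOn J U w) :
    CauchyRiemannOn J U (v + w) := fun z hz => by
  obtain ⟨L, hL, hLI⟩ := hv z hz
  obtain ⟨M, hM, hMI⟩ := hw z hz
  exact ⟨L + M, hL.add hM, by simp [hLI, hMI, mul_add]⟩

lemma sub (hv : CauchyRiemannOn J U v) (hw : CauchyRiemannOn J U w) :
    CauchyRiemannOn J U (v - w) := fun z hz => by
  obtain ⟨L, hL, hLI⟩ := hv z hz
  obtain ⟨M, hM, hMI⟩ := hw z hz
  exact ⟨L - M, hL.sub hM, by simp [hLI, hMI, mul_sub]⟩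

lemma const_mul (hw : CauchyRiemannOn I U w) {c : H} (hc : c * I = J * c) :
    CauchyRiemannOn J U (fun z => c * w z) := fun z hz => by
  obtain ⟨L, hL, hLI⟩ := hw z hz
  exact ⟨c • L, hL.const_mul c, by simp [hLI, ← mul_assoc, hc]⟩

lemma differentiableAt_comp {E : Type*} [NormedAddCommGroup E] [NormedSpace ℝ E]
    [NormedSpace ℂ E] [IsScalarTower ℝ ℂ E] (hw : CauchyRiemannOn J U w) (π : H →L[ℝ] E)
    (hπ : ∀ u, π (J * u) = Complex.I • π u) {z : ℂ} (hz : z ∈ U) :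
    DifferentiableAt ℂ (π ∘ w) z := by
  obtain ⟨L, hL, hLI⟩ := hw z hz
  exact differentiableAt_of_hasFDerivAt_of_map_I (π.hasFDerivAt.comp z hL) (by simp [hLI, hπ])

lemma eqOn_zero_of_ofReal (hJ : J ∈ Sph) (hw : CauchyRiemannOn J U w) (hUo : IsOpen U)
    (hUc : IsPreconnected U) {r : ℝ} (hr : (r : ℂ) ∈ U) (hvan : ∀ t : ℝ, (t : ℂ) ∈ U → w t = 0) :
    Set.EqOn w 0 U := by
  let := sliceNormedSpace hJ
  have := sliceModule_isScalarTower hJ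
  have hwa : AnalyticOnNhd ℂ w U := DifferentiableOn.analyticOnNhd (fun z hz =>
    (hw.differentiableAt_comp (ContinuousLinearMap.id ℝ H)
      (fun u => by rw [sliceModule_smul hJ, toSlice_I]; rfl) hz).differentiableWithinAt) hUo
  refine hwa.eqOn_zero_of_preconnected_of_eventually_ofReal_eq_zero hUc hr ?_
  filter_upwards [Complex.continuous_ofReal.continuousAt.preimage_mem_nhds (hUo.mem_nhds hr)]
    with t ht using hvan t ht

end CauchyRiemannOn

lemma SliceRegular.cauchyRiemannOn {Ω : Set H} {f : H → H} (hf : SliceRegular Ω f) {J : H}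
    (hJ : J ∈ Sph) : CauchyRiemannOn J (toSlice J ⁻¹' Ω) (f ∘ toSlice J) := fun z hz => by
  obtain ⟨hdiff, hCR⟩ := hf J hJ z.re z.im hz
  set L := fderiv ℝ (fun p : ℝ × ℝ => f ((p.1 : H) + p.2 • J)) (z.re, z.im)
  refine ⟨L.comp equivRealProdCLM.toContinuousLinearMap,
    hdiff.hasFDerivAt.comp z equivRealProdCLM.hasFDerivAt, ?_⟩
  have hL : J * (L (1, 0) + J * L (0, 1)) = 0 := by rw [hCR, mul_zero]
  rw [mul_add, ← mul_assoc, Sph.mul_self hJ, neg_one_mul, ← sub_eq_add_neg, sub_eq_zero] at hL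
  simpa using hL.symm

namespace AxSymm

variable {Ω : Set H} {I J : H}

lemma toSlice_preimage_eq (hΩ : AxSymm Ω) (hI : I ∈ Sph) (hJ : J ∈ Sph) :
    toSlice I ⁻¹' Ω = toSlice J ⁻¹' Ω :=
  Set.ext fun _ => ⟨fun h => hΩ _ _ I hI h J hJ, fun h => hΩ _ _ J hJ h I hI⟩

lemma conj_mem_toSlice_preimage (hΩ : AxSymm Ω) (hI : I ∈ Sph) {z : ℂ}
    (hz : z ∈ toSlice I ⁻¹' Ω) : conj z ∈ toSlice I ⁻¹' Ω := by
  rw [hΩ.toSlice_preimage_eq hI (Sph.neg_mem hI)] at hz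
  simpa [Set.mem_preimage, toSlice_conj] using hz

end AxSymm

namespace IsSliceDomain

variable {Ω : Set H} {I : H}

lemma isPreconnected_toSlice_preimage (hΩ : IsSliceDomain Ω) (hI : I ∈ Sph) :
    IsPreconnected (toSlice I ⁻¹' Ω) := by
  have himage : toSlice I '' (toSlice I ⁻¹' Ω) = Ω ∩ Slice I := by
    ext q
    constructor
    · rintro ⟨z, hz, rfl⟩
      exact ⟨hz, z.re, z.im, rfl⟩
    · rintro ⟨hq, x, y, rfl⟩
      exact ⟨⟨x, y⟩, hq, rfl⟩
  rw [← (isInducing_toSlice hI).isPreconnected_image, himage]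
  exact (hΩ.2.2.2 I hI).isPreconnected

lemma exists_ofReal_mem_toSlice_preimage (hΩ : IsSliceDomain Ω) (I : H) :
    ∃ r : ℝ, (r : ℂ) ∈ toSlice I ⁻¹' Ω := by
  obtain ⟨_, hq, r, rfl⟩ := hΩ.2.2.1
  exact ⟨r, by simpa using hq⟩

end IsSliceDomain

lemma half_smul_add_add_mul_half_smul (I K p q : H) :
    (2⁻¹ : ℝ) • (p + q) + K * ((2⁻¹ : ℝ) • (I * (q - p))) =
      (2⁻¹ : ℝ) • (1 - K * I) * p + (2⁻¹ : ℝ) • (1 + K * I) * q := by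
  simp only [mul_smul_comm, smul_mul_assoc, ← smul_add]
  congr 1
  noncomm_ring

lemma Sph.half_one_sub_mul_mul {I K : H} (hI : I ∈ Sph) (hK : K ∈ Sph) :
    (2⁻¹ : ℝ) • (1 - K * I) * I = K * ((2⁻¹ : ℝ) • (1 - K * I)) := by
  simp only [mul_smul_comm, smul_mul_assoc, sub_mul, mul_sub, mul_neg, mul_one, one_mul,
    mul_assoc, Sph.mul_self hI, ← mul_assoc K K, Sph.mul_self hK, neg_one_mul]
  module

lemma Sph.half_one_add_mul_mul_neg {I K : H} (hI : I ∈ Sph) (hK : K ∈ Sph) :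
    (2⁻¹ : ℝ) • (1 + K * I) * -I = K * ((2⁻¹ : ℝ) • (1 + K * I)) := by
  simp only [mul_smul_comm, smul_mul_assoc, add_mul, mul_add, mul_neg, mul_one, one_mul,
    mul_assoc, Sph.mul_self hI, ← mul_assoc K K, Sph.mul_self hK, neg_one_mul]
  module

theorem SliceRegular.exists_forall_toSlice_eq_add_mul {Ω : Set H} {f : H → H}
    (hΩ : IsSymmSliceDomain Ω) (hf : SliceRegular Ω f) {I : H} (hI : I ∈ Sph) {z : ℂ}
    (hz : toSlice I z ∈ Ω) : ∃ a b : H, ∀ K ∈ Sph, f (toSlice K z) = a + K * b := by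
  refine ⟨(2⁻¹ : ℝ) • (f (toSlice I z) + f (toSlice (-I) z)),
    (2⁻¹ : ℝ) • (I * (f (toSlice (-I) z) - f (toSlice I z))), fun K hK => ?_⟩
  rw [half_smul_add_add_mul_half_smul, ← sub_eq_zero]
  set c₁ : H := (2⁻¹ : ℝ) • (1 - K * I)
  set c₂ : H := (2⁻¹ : ℝ) • (1 + K * I)
  have hc : c₁ + c₂ = 1 := by
    rw [← smul_add, sub_add_add_cancel, ← two_smul ℝ, smul_smul]; norm_num
  have hUI := hΩ.2.toSlice_preimage_eq hI hK
  have hU'I := hΩ.2.toSlice_preimage_eq (Sph.neg_mem hI) hK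
  have hw : CauchyRiemannOn K (toSlice K ⁻¹' Ω)
      (f ∘ toSlice K - ((fun z => c₁ * f (toSlice I z)) + fun z => c₂ * f (toSlice (-I) z))) := by
    refine (hf.cauchyRiemannOn hK).sub (CauchyRiemannOn.add ?_ ?_)
    · exact hUI ▸ (hf.cauchyRiemannOn hI).const_mul (Sph.half_one_sub_mul_mul hI hK)
    · exact hU'I ▸ (hf.cauchyRiemannOn (Sph.neg_mem hI)).const_mul
        (Sph.half_one_add_mul_mul_neg hI hK)
  obtain ⟨r, hr⟩ := hΩ.1.exists_ofReal_mem_toSlice_preimage K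
  refine hw.eqOn_zero_of_ofReal hK (hΩ.1.1.preimage (continuous_toSlice K))
    (hΩ.1.isPreconnected_toSlice_preimage hK) hr (fun t _ => ?_) (hUI ▸ hz)
  simp [← add_mul, hc]

theorem SliceRegular.forall_mem_sphSet_eq_zero {Ω : Set H} {f : H → H}
    (hΩ : IsSymmSliceDomain Ω) (hf : SliceRegular Ω f) {x y : ℝ} {p₁ p₂ : H}
    (hp₁ : p₁ ∈ sphSet x y) (hp₂ : p₂ ∈ sphSet x y) (hne : p₁ ≠ p₂) (hp₁Ω : p₁ ∈ Ω)
    (hf₁ : f p₁ = 0) (hf₂ : f p₂ = 0) : ∀ q ∈ sphSet x y, f q = 0 := by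
  obtain ⟨K₁, hK₁, rfl⟩ := hp₁
  obtain ⟨K₂, hK₂, rfl⟩ := hp₂
  rw [← toSlice_mk] at hp₁Ω hf₁ hf₂
  obtain ⟨a, b, hab⟩ := hf.exists_forall_toSlice_eq_add_mul hΩ hK₁ hp₁Ω
  rw [hab K₁ hK₁] at hf₁
  rw [hab K₂ hK₂] at hf₂
  have hb : b = 0 := by
    have h : (K₁ - K₂) * b = 0 := by rw [sub_mul, ← add_sub_add_left_eq_sub, hf₁, hf₂, sub_zero]
    refine (mul_eq_zero.mp h).resolve_left (sub_ne_zero.mpr fun hK => hne ?_)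
    rw [hK]
  rw [hb, mul_zero, add_zero] at hf₁
  rintro _ ⟨K, hK, rfl⟩
  rw [← toSlice_mk, hab K hK, hf₁, hb, mul_zero, add_zero]

/-- The coordinates `(F, G) ∈ ℂ²` of `q = F + G j`, with `ℂ` identified with the slice `ℂ_i`. -/
def splitF : H →L[ℝ] ℂ :=
  LinearMap.toContinuousLinearMap
    { toFun := fun q => ⟨q.re, q.imI⟩
      map_add' := fun _ _ => by apply Complex.ext <;> simp
      map_smul' := fun _ _ => by apply Complex.ext <;> simp }

def splitG : H →L[ℝ] ℂ :=
  LinearMap.toContinuousLinearMap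
    { toFun := fun q => ⟨q.imJ, q.imK⟩
      map_add' := fun _ _ => by apply Complex.ext <;> simp
      map_smul' := fun _ _ => by apply Complex.ext <;> simp }

@[simp] lemma splitF_apply (q : H) : splitF q = ⟨q.re, q.imI⟩ := rfl
@[simp] lemma splitG_apply (q : H) : splitG q = ⟨q.imJ, q.imK⟩ := rfl

lemma splitF_qI_mul (u : H) : splitF (qI * u) = Complex.I • splitF u := by
  apply Complex.ext <;> simp [Quaternion.re_mul, Quaternion.imI_mul]

lemma splitG_qI_mul (u : H) : splitG (qI * u) = Complex.I • splitG u := by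
  apply Complex.ext <;> simp [Quaternion.imJ_mul, Quaternion.imK_mul]

/-- On the slice `ℂ_i`, the symmetrization `f^s = f * f^c` of `f = F + G j` is
`F(z) conj(F(conj z)) + G(z) conj(G(conj z)) = symmPair (f z) (f (conj z))`. -/
def symmPair (p q : H) : ℂ := splitF p * conj (splitF q) + splitG p * conj (splitG q)

lemma symmPair_self (p : H) : symmPair p p = ((Quaternion.normSq p : ℝ) : ℂ) := by
  simp only [symmPair, Complex.mul_conj, ← Complex.ofReal_add]
  simp only [splitF_apply, splitG_apply, Complex.normSq_apply, normSq_def', Complex.ofReal_add,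
    Complex.ofReal_mul, Complex.ofReal_pow]
  ring

lemma toSlice_symmPair (a b : H) :
    toSlice qI (symmPair (a + qI * b) (a - qI * b)) =
      a * star a - b * star b + qI * (a * star b + b * star a) := by
  ext <;>
    simp [symmPair, toSlice, Quaternion.re_mul, Quaternion.imI_mul, Quaternion.imJ_mul,
      Quaternion.imK_mul] <;>
    ring

lemma symmPair_eq_zero {K a b : H} (hK : K ∈ Sph) (h : a + K * b = 0) :
    symmPair (a + qI * b) (a - qI * b) = 0 := by
  rw [← norm_eq_zero, ← norm_toSlice qI_mem, norm_eq_zero, toSlice_symmPair,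
    eq_neg_of_add_eq_zero_left h]
  have hstar : star (-(K * b)) = star b * K := by
    rw [star_neg, star_mul, Sph.star_eq hK, mul_neg, neg_neg]
  have e₁ : -(K * b) * (star b * K) = -(K * (b * star b) * K) := by noncomm_ring
  have e₂ : -(K * b) * star b = -(K * (b * star b)) := by noncomm_ring
  rw [hstar, e₁, e₂, ← mul_assoc b, self_mul_star, ← coe_commutes, mul_assoc, Sph.mul_self hK]
  noncomm_ring

lemma CauchyRiemannOn.differentiableOn_symmPair {U : Set ℂ} {w : ℂ → H}
    (hw : CauchyRiemannOn qI U w) (hU : ∀ z ∈ U, conj z ∈ U) :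
    DifferentiableOn ℂ (fun z => symmPair (w z) (w (conj z))) U := fun z hz => by
  have hF := fun z hz => hw.differentiableAt_comp splitF splitF_qI_mul (z := z) hz
  have hG := fun z hz => hw.differentiableAt_comp splitG splitG_qI_mul (z := z) hz
  refine DifferentiableAt.differentiableWithinAt ?_
  exact ((hF z hz).mul (differentiableAt_conj_conj_iff.mpr (hF _ (hU z hz)))).add
    ((hG z hz).mul (differentiableAt_conj_conj_iff.mpr (hG _ (hU z hz))))

/-- The point of the upper half plane corresponding to the sphere `re q + ‖im q‖ 𝕊` through `q`. -/
def sliceCoord (q : H) : ℂ := ⟨q.re, ‖q.im‖⟩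

lemma exists_toSlice_sliceCoord (q : H) : ∃ J ∈ Sph, toSlice J (sliceCoord q) = q := by
  by_cases hq : q.im = 0
  · refine ⟨qI, qI_mem, ?_⟩
    simpa [toSlice, sliceCoord, hq] using Quaternion.re_add_im q
  · refine ⟨‖q.im‖⁻¹ • q.im, Sph.unit_im_mem hq, ?_⟩
    rw [toSlice, sliceCoord, smul_smul, mul_inv_cancel₀ (norm_ne_zero_iff.mpr hq), one_smul]
    exact Quaternion.re_add_im q

lemma mem_sphSet_iff_sliceCoord_eq {q : H} {x y : ℝ} (hy : 0 ≤ y) :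
    q ∈ sphSet x y ↔ sliceCoord q = ⟨x, y⟩ := by
  constructor
  · rintro ⟨K, hK, rfl⟩
    have him : ((x : H) + y • K).im = y • K := by ext <;> simp [Sph.re_eq_zero hK]
    rw [sliceCoord, him, norm_smul, Sph.norm_eq_one hK, mul_one, Real.norm_of_nonneg hy]
    simp [Sph.re_eq_zero hK]
  · intro h
    obtain ⟨J, hJ, hq⟩ := exists_toSlice_sliceCoord q
    exact ⟨J, hJ, by rw [← hq, h, toSlice_mk]⟩

lemma sphSet_zero (x : ℝ) : sphSet x 0 = {(x : H)} := by
  ext q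
  simpa [sphSet] using fun _ => ⟨qI, qI_mem⟩

lemma norm_sq_eq_re_sq_add_norm_im_sq (q : H) : ‖q‖ ^ 2 = q.re ^ 2 + ‖q.im‖ ^ 2 := by
  rw [sq ‖q‖, sq ‖q.im‖, ← normSq_eq_norm_mul_self, ← normSq_eq_norm_mul_self, normSq_def',
    normSq_def']
  simp only [re_im, imI_im, imJ_im, imK_im]
  ring

lemma dist_sliceCoord_le (p q : H) : dist (sliceCoord p) (sliceCoord q) ≤ ‖p - q‖ := by
  rw [Complex.dist_eq, ← sq_le_sq₀ (norm_nonneg _) (norm_nonneg _), Complex.sq_norm,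
    Complex.normSq_apply, norm_sq_eq_re_sq_add_norm_im_sq]
  have := abs_norm_sub_norm_le p.im q.im
  simp only [sliceCoord, Complex.sub_re, Complex.sub_im, Quaternion.re_sub, Quaternion.im_sub]
  nlinarith [abs_nonneg (‖p.im‖ - ‖q.im‖), sq_abs (‖p.im‖ - ‖q.im‖)]

namespace SliceRegular

variable {Ω : Set H} {f : H → H}

lemma exists_ofReal_ne_zero (hΩ : IsSliceDomain Ω) (hf : SliceRegular Ω f)
    (hne : ¬ ∀ q ∈ Ω, f q = 0) : ∃ r : ℝ, (r : H) ∈ Ω ∧ f r ≠ 0 := by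
  by_contra! hreal
  refine hne fun q hq => ?_
  obtain ⟨J, hJ, hqJ⟩ := exists_toSlice_sliceCoord q
  rw [← hqJ] at hq ⊢
  obtain ⟨r, hr⟩ := hΩ.exists_ofReal_mem_toSlice_preimage J
  exact (hf.cauchyRiemannOn hJ).eqOn_zero_of_ofReal hJ (hΩ.1.preimage (continuous_toSlice J))
    (hΩ.isPreconnected_toSlice_preimage hJ) hr
    (fun t ht => by simpa using hreal t (by simpa using ht)) hq

lemma symmPair_eq_zero_of_apply_eq_zero (hΩ : IsSymmSliceDomain Ω) (hf : SliceRegular Ω f)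
    {z : ℂ} (hz : toSlice qI z ∈ Ω) {J : H} (hJ : J ∈ Sph) (hfz : f (toSlice J z) = 0) :
    symmPair (f (toSlice qI z)) (f (toSlice qI (conj z))) = 0 := by
  obtain ⟨a, b, hab⟩ := hf.exists_forall_toSlice_eq_add_mul hΩ qI_mem hz
  rw [toSlice_conj, hab qI qI_mem, hab (-qI) (Sph.neg_mem qI_mem), neg_mul, ← sub_eq_add_neg]
  exact symmPair_eq_zero hJ (hab J hJ ▸ hfz)

theorem exists_forall_dist_sliceCoord_lt (hΩ : IsSymmSliceDomain Ω) (hf : SliceRegular Ω f)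
    (hne : ¬ ∀ q ∈ Ω, f q = 0) {q₀ : H} (hq₀ : q₀ ∈ Ω) :
    ∃ ε > 0, ∀ q ∈ Ω, f q = 0 → dist (sliceCoord q) (sliceCoord q₀) < ε →
      sliceCoord q = sliceCoord q₀ := by
  have hcoord : ∀ q ∈ Ω, ∃ J ∈ Sph,
      sliceCoord q ∈ toSlice qI ⁻¹' Ω ∧ f (toSlice J (sliceCoord q)) = f q := by
    intro q hq
    obtain ⟨J, hJ, hqJ⟩ := exists_toSlice_sliceCoord q
    have hqU : sliceCoord q ∈ toSlice J ⁻¹' Ω := by rw [Set.mem_preimage, hqJ]; exact hq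
    exact ⟨J, hJ, (hΩ.2.toSlice_preimage_eq qI_mem hJ).symm ▸ hqU, by rw [hqJ]⟩
  have hsymm : DifferentiableOn ℂ
      (fun z => symmPair (f (toSlice qI z)) (f (toSlice qI (conj z)))) (toSlice qI ⁻¹' Ω) :=
    (hf.cauchyRiemannOn qI_mem).differentiableOn_symmPair
      fun z => hΩ.2.conj_mem_toSlice_preimage qI_mem
  obtain ⟨r, hrΩ, hfr⟩ := exists_ofReal_ne_zero hΩ.1 hf hne
  obtain ⟨J₀, -, hq₀U, -⟩ := hcoord q₀ hq₀
  obtain ⟨ε, hε, hiso⟩ := (hsymm.analyticOnNhd (hΩ.1.1.preimage (continuous_toSlice qI)))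
    |>.exists_forall_dist_lt_eq_of_apply_eq_zero (hΩ.1.isPreconnected_toSlice_preimage qI_mem)
      (z₁ := r) (by simpa using hrΩ) (by simpa [symmPair_self] using hfr) hq₀U
  refine ⟨ε, hε, fun q hq hfq hdist => hiso _ hdist ?_⟩
  obtain ⟨J, hJ, hqU, hfJ⟩ := hcoord q hq
  exact symmPair_eq_zero_of_apply_eq_zero hΩ hf hqU hJ (hfJ ▸ hfq)

end SliceRegular

/-- Structure of the Zero Set: each zero of a not identically
vanishing slice regular `f` is either isolated in the zero set, or lies on a
sphere `x + y𝕊` (`y ≠ 0`) of zeros which is isolated in the zero set. -/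
theorem structure_of_zero_set (Ω : Set H) (hΩ : IsSymmSliceDomain Ω)
    (f : H → H) (hf : SliceRegular Ω f) (hne : ¬ ∀ q ∈ Ω, f q = 0) :
    ∀ q₀ ∈ Ω, f q₀ = 0 →
      (∃ ε > (0 : ℝ), ∀ q ∈ Ω, f q = 0 → ‖q - q₀‖ < ε → q = q₀) ∨
      (∃ x y : ℝ, y ≠ 0 ∧ q₀ ∈ sphSet x y ∧ (∀ q ∈ sphSet x y, f q = 0) ∧
        ∃ ε > (0 : ℝ), ∀ q ∈ Ω, f q = 0 →
          (∃ p ∈ sphSet x y, ‖q - p‖ < ε) → q ∈ sphSet x y) := by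
  intro q₀ hq₀ hfq₀
  obtain ⟨ε, hε, hiso⟩ := hf.exists_forall_dist_sliceCoord_lt hΩ hne hq₀
  set S := sphSet q₀.re ‖q₀.im‖
  have hmemS : ∀ {q}, q ∈ S ↔ sliceCoord q = sliceCoord q₀ :=
    mem_sphSet_iff_sliceCoord_eq (norm_nonneg _)
  have hnear : ∀ q ∈ Ω, f q = 0 → ∀ p ∈ S, ‖q - p‖ < ε → q ∈ S := fun q hq hfq p hp hqp =>
    hmemS.mpr (hiso q hq hfq (hmemS.mp hp ▸ (dist_sliceCoord_le q p).trans_lt hqp))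
  have hq₀S : q₀ ∈ S := hmemS.mpr rfl
  by_cases him : q₀.im = 0
  · refine .inl ⟨ε, hε, fun q hq hfq hqq₀ => ?_⟩
    have hS : S = {(q₀.re : H)} := by simp only [S, him, norm_zero, sphSet_zero]
    have hqS := hnear q hq hfq q₀ hq₀S hqq₀
    rw [hS] at hqS hq₀S
    exact hqS.trans hq₀S.symm
  by_cases hall : ∀ q ∈ S, f q = 0
  · exact .inr ⟨_, _, norm_ne_zero_iff.mpr him, hq₀S, hall, ε, hε,
      fun q hq hfq ⟨p, hp, hqp⟩ => hnear q hq hfq p hp hqp⟩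
  · refine .inl ⟨ε, hε, fun q hq hfq hqq₀ => by_contra fun hqq₀' => hall ?_⟩
    exact hf.forall_mem_sphSet_eq_zero hΩ (hnear q hq hfq q₀ hq₀S hqq₀) hq₀S hqq₀' hq hfq hfq₀
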